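/- Let p be an odd prime and let b be a nonnegative integer. Then the function f : ℕ → ℚ defined by f(k) = (1 - (-1)^{(p-1)/2} · p^{k(p-1)+b}) E_{k(p-1)+b} is a p-regular function, where E_n denotes the Euler numbers. -/

import Mathlib

/-!
Put `W_m(N) = ∑_{j<m} (-1)^j (m-1-2j)^N`. For odd `m`, `∑_{j<m} (-1)^j e^{(m-1-2j)t}` equals
`cosh(mt) / cosh t`, so the generating function `sech t` of the Euler numbers satisfies
`sech t = W_m(t) sech(mt)`; comparing coefficients gives `E_N ≡ W_m(N) (mod m)`.
In `W_{p^{n+1}}(N)` the terms whose base `a_j = p^{n+1}-1-2j` is divisible by `p` add up to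
`(-1)^{(p-1)/2} p^N W_{p^n}(N)`, hence `(1 - (-1)^{(p-1)/2} p^N) E_N` is congruent mod `p^n` to
the sum `∑' (-1)^j a_j^N` over the bases prime to `p`. For that sum, the alternating binomial sum
over `N = k(p-1)+b` is `∑' (-1)^j a_j^b (1 - a_j^{p-1})^n`, divisible by `p^n` by Fermat.
-/

/-- A rational number is `p`-integral if `p` does not divide its denominator. -/
def PIntegral (p : ℕ) (q : ℚ) : Prop := ¬ p ∣ q.den

/-- A function `f : ℕ → ℚ` taking `p`-integral values is `p`-regular if
`∑_{k=0}^n C(n,k) (-1)^k f(k) ≡ 0 (mod p^n)` for every `n ≥ 1`. -/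
def PRegular (p : ℕ) (f : ℕ → ℚ) : Prop :=
  (∀ k : ℕ, PIntegral p (f k)) ∧
  ∀ n : ℕ, 1 ≤ n →
    PIntegral p ((∑ i ∈ Finset.range (n + 1), (n.choose i : ℚ) * (-1) ^ i * f i) / p ^ n)

open Finset PowerSeries
open scoped Nat

structure IsEulerSequence (E : ℕ → ℤ) : Prop where
  zero : E 0 = 1
  odd : ∀ n : ℕ, 1 ≤ n → E (2 * n - 1) = 0
  sum_choose : ∀ n : ℕ, 1 ≤ n →
    ∑ r ∈ range (n + 1), ((2 * n).choose (2 * r) : ℤ) * E (2 * r) = 0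

lemma IsEulerSequence.eq_zero_of_odd {E : ℕ → ℤ} (hE : IsEulerSequence E) {i : ℕ}
    (hi : Odd i) : E i = 0 := by
  obtain ⟨r, rfl⟩ := hi
  simpa [Nat.mul_add] using hE.odd (r + 1) (by omega)

lemma sum_range_two_mul_add_one_of_odd_eq_zero {M : Type*} [AddCommMonoid M] {g : ℕ → M}
    (hg : ∀ i, Odd i → g i = 0) (a : ℕ) :
    ∑ i ∈ range (2 * a + 1), g i = ∑ r ∈ range (a + 1), g (2 * r) := by
  induction a with
  | zero => simp
  | succ a ih =>
    rw [show 2 * (a + 1) + 1 = 2 * a + 1 + 1 + 1 by ring, sum_range_succ, sum_range_succ, ih,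
      hg _ (odd_two_mul_add_one a), add_zero, sum_range_succ _ (a + 1)]
    rfl

section Egf

variable {K : Type*} [Field K]

noncomputable def egf (a : ℕ → K) : K⟦X⟧ := mk fun n => a n / n !

lemma coeff_egf_mul_egf [CharZero K] (a b : ℕ → K) (n : ℕ) :
    coeff n (egf a * egf b) = (∑ i ∈ range (n + 1), n.choose i * a i * b (n - i)) / n ! := by
  rw [coeff_mul, Nat.sum_antidiagonal_eq_sum_range_succ_mk, sum_div]
  refine sum_congr rfl fun i hi => ?_
  have hin : i ≤ n := Nat.lt_succ_iff.mp (mem_range.mp hi)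
  have hn : (n ! : K) ≠ 0 := Nat.cast_ne_zero.mpr n.factorial_ne_zero
  simp only [egf, coeff_mk, Nat.cast_choose K hin]
  field_simp

lemma rescale_egf (c : K) (a : ℕ → K) : rescale c (egf a) = egf fun n => c ^ n * a n := by
  ext n
  simp [egf, mul_div_assoc]

end Egf

noncomputable def twoCosh : ℚ⟦X⟧ := exp ℚ + rescale (-1) (exp ℚ)

lemma twoCosh_eq_egf : twoCosh = egf fun n => 1 + (-1) ^ n := by
  ext n
  simp [twoCosh, egf, coeff_exp, div_eq_mul_inv, add_mul]

def altPowerSum (m N : ℕ) : ℤ := ∑ j ∈ range m, (-1) ^ j * ((m : ℤ) - 1 - 2 * j) ^ N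

lemma egf_altPowerSum (m : ℕ) :
    egf (fun N => (altPowerSum m N : ℚ)) =
      ∑ j ∈ range m, (-1 : ℚ) ^ j • rescale ((m : ℚ) - 1 - 2 * j) (exp ℚ) := by
  ext N
  simp [egf, altPowerSum, coeff_exp, div_eq_mul_inv, sum_mul, mul_assoc]

lemma rescale_exp_mul_twoCosh (c : ℚ) :
    rescale c (exp ℚ) * twoCosh = rescale (c + 1) (exp ℚ) + rescale (c - 1) (exp ℚ) := by
  rw [twoCosh, mul_add, ← exp_mul_exp_eq_exp_add, rescale_one, RingHom.id_apply,
    exp_mul_exp_eq_exp_add, sub_eq_add_neg]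

lemma egf_altPowerSum_mul_twoCosh {m : ℕ} (hm : Odd m) :
    egf (fun N => (altPowerSum m N : ℚ)) * twoCosh = rescale (m : ℚ) twoCosh := by
  set u : ℕ → ℚ⟦X⟧ := fun j => (-1 : ℚ) ^ j • rescale ((m : ℚ) - 2 * j) (exp ℚ)
  have hterm (j : ℕ) :
      (-1 : ℚ) ^ j • rescale ((m : ℚ) - 1 - 2 * j) (exp ℚ) * twoCosh = u j - u (j + 1) := by
    have e1 : (m : ℚ) - 1 - 2 * j + 1 = m - 2 * j := by ring
    have e2 : (m : ℚ) - 1 - 2 * j - 1 = m - 2 * (j + 1 : ℕ) := by push_cast; ring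
    rw [smul_mul_assoc, rescale_exp_mul_twoCosh, e1, e2, smul_add]
    simp only [u]
    rw [pow_succ, mul_neg_one, neg_smul, sub_neg_eq_add]
  rw [egf_altPowerSum, sum_mul, sum_congr rfl fun j _ => hterm j, sum_range_sub']
  simp [u, twoCosh, hm.neg_one_pow, rescale_rescale, sub_eq_add_neg, two_mul]

namespace IsEulerSequence

variable {E : ℕ → ℤ} (hE : IsEulerSequence E)
include hE

lemma egf_mul_twoCosh : egf (fun n => (E n : ℚ)) * twoCosh = 2 := by
  rw [twoCosh_eq_egf]
  ext n
  have hterm : ∀ i ∈ range (n + 1), (n.choose i : ℚ) * E i * (1 + (-1) ^ (n - i)) =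
      (1 + (-1) ^ n) * (n.choose i * E i) := by
    intro i hi
    rcases Nat.even_or_odd i with hi' | hi'
    · have : (-1 : ℚ) ^ (n - i) = (-1) ^ n := by
        rw [← pow_sub_mul_pow (-1 : ℚ) (mem_range_succ_iff.mp hi), hi'.neg_one_pow, mul_one]
      rw [this]
      ring
    · simp [hE.eq_zero_of_odd hi']
  rw [coeff_egf_mul_egf, sum_congr rfl hterm, ← mul_sum, ← map_ofNat C 2, coeff_C]
  rcases n.even_or_odd' with ⟨a, rfl | rfl⟩
  · rcases Nat.eq_zero_or_pos a with rfl | ha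
    · norm_num [hE.zero]
    · have hsum : ∑ i ∈ range (2 * a + 1), ((2 * a).choose i : ℚ) * E i = 0 := by
        rw [sum_range_two_mul_add_one_of_odd_eq_zero (fun i hi => by simp [hE.eq_zero_of_odd hi])]
        exact_mod_cast hE.sum_choose a ha
      simp [hsum, ha.ne']
  · simp [pow_succ]

lemma egf_eq_mul_rescale {m : ℕ} (hm : Odd m) :
    egf (fun n => (E n : ℚ)) =
      egf (fun N => (altPowerSum m N : ℚ)) * rescale (m : ℚ) (egf fun n => (E n : ℚ)) := by
  have hC : twoCosh ≠ 0 := fun h => by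
    simpa [twoCosh_eq_egf, egf] using congrArg (coeff 0) h
  apply mul_right_cancel₀ hC
  rw [hE.egf_mul_twoCosh, mul_right_comm, egf_altPowerSum_mul_twoCosh hm, ← map_mul,
    mul_comm twoCosh, hE.egf_mul_twoCosh, map_ofNat]

lemma eq_sum_choose_altPowerSum {m : ℕ} (hm : Odd m) (N : ℕ) :
    E N = ∑ i ∈ range (N + 1), N.choose i * altPowerSum m i * (m ^ (N - i) * E (N - i)) := by
  have h := congrArg (coeff N) (hE.egf_eq_mul_rescale hm)
  rw [rescale_egf, coeff_egf_mul_egf] at h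
  simp only [egf, coeff_mk] at h
  exact_mod_cast (div_left_inj' (Nat.cast_ne_zero.mpr N.factorial_ne_zero)).mp h

lemma dvd_sub_altPowerSum {m : ℕ} (hm : Odd m) (N : ℕ) :
    (m : ℤ) ∣ E N - altPowerSum m N := by
  rw [hE.eq_sum_choose_altPowerSum hm N, sum_range_succ]
  simp only [Nat.choose_self, Nat.sub_self, pow_zero, hE.zero, Nat.cast_one, one_mul, mul_one,
    add_sub_cancel_right]
  refine dvd_sum fun i hi => dvd_mul_of_dvd_right (dvd_mul_of_dvd_left (dvd_pow_self _ ?_) _) _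
  have := mem_range.mp hi
  omega

end IsEulerSequence

def unitAltPowerSum (p m N : ℕ) : ℤ :=
  ∑ j ∈ (range m).filter (fun j : ℕ => ¬ (p : ℤ) ∣ m - 1 - 2 * j),
    (-1) ^ j * ((m : ℤ) - 1 - 2 * j) ^ N

lemma Nat.mod_eq_of_dvd_two_mul_add_one {p j : ℕ} (h : p ∣ 2 * j + 1) :
    j % p = (p - 1) / 2 := by
  have hp : 0 < p := Nat.pos_of_dvd_of_pos h (by omega)
  have hmod : p ∣ 2 * (j % p) + 1 :=
    ((((Nat.mod_modEq j p).mul_left 2).add_right 1).dvd_iff dvd_rfl).mpr h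
  have := Nat.eq_of_dvd_of_lt_two_mul (by omega) hmod (by have := Nat.mod_lt j hp; omega)
  omega

lemma altPowerSum_mul {p : ℕ} (hp : Odd p) (m N : ℕ) :
    altPowerSum (p * m) N =
      unitAltPowerSum p (p * m) N + (-1) ^ ((p - 1) / 2) * p ^ N * altPowerSum m N := by
  have hsign : (-1 : ℤ) ^ p = -1 := hp.neg_one_pow
  obtain ⟨t, hpt⟩ := hp
  have ht : (p - 1) / 2 = t := by omega
  have hp0 : 0 < p := by omega
  have hbase (q : ℕ) :
      ((p * m : ℕ) : ℤ) - 1 - 2 * ((t + p * q : ℕ) : ℤ) = p * ((m : ℤ) - 1 - 2 * q) := by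
    have hpt' : (p : ℤ) = 2 * t + 1 := by exact_mod_cast hpt
    push_cast
    linear_combination hpt'
  set divisible : ℕ → Prop := fun j => (p : ℤ) ∣ ((p * m : ℕ) : ℤ) - 1 - 2 * j
  rw [ht, altPowerSum, unitAltPowerSum, ← sum_filter_not_add_sum_filter _ divisible,
    altPowerSum, mul_sum]
  congr 1
  -- The terms with `p` dividing the base are those with `j = (p-1)/2 + p q`, `q < m`.
  have hdecomp : ∀ j ∈ (range (p * m)).filter divisible, t + p * (j / p) = j := by
    intro j hj
    have hdvd : (p : ℤ) ∣ ((2 * j + 1 : ℕ) : ℤ) := by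
      have : ((2 * j + 1 : ℕ) : ℤ) = p * m - (((p * m : ℕ) : ℤ) - 1 - 2 * j) := by
        push_cast
        ring
      exact this ▸ dvd_sub (dvd_mul_right _ _) (mem_filter.mp hj).2
    have hmod := Nat.mod_eq_of_dvd_two_mul_add_one (Int.natCast_dvd_natCast.mp hdvd)
    have := Nat.div_add_mod j p
    omega
  refine sum_nbij' (· / p) (fun q => t + p * q) ?_ ?_ hdecomp ?_ ?_
  · intro j hj
    rw [mem_filter, mem_range] at hj
    exact mem_range.mpr (Nat.div_lt_of_lt_mul hj.1)
  · intro q hq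
    rw [mem_range] at hq
    refine mem_filter.mpr ⟨mem_range.mpr ?_, ⟨(m : ℤ) - 1 - 2 * q, hbase q⟩⟩
    nlinarith
  · intro q _
    simp [Nat.add_mul_div_left _ _ hp0, Nat.div_eq_of_lt (show t < p by omega)]
  · intro j hj
    conv_lhs => rw [← hdecomp j hj, hbase, mul_pow, pow_add, pow_mul, hsign]
    ring

lemma sum_choose_mul_neg_one_pow_mul_pow {R : Type*} [CommRing R] (a : R) (n d b : ℕ) :
    ∑ k ∈ range (n + 1), (n.choose k : R) * (-1) ^ k * a ^ (k * d + b) =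
      a ^ b * (1 - a ^ d) ^ n := by
  rw [← neg_add_eq_sub, add_pow, mul_sum]
  refine sum_congr rfl fun k _ => ?_
  rw [neg_pow, one_pow, pow_add, pow_mul']
  ring

lemma pow_dvd_sum_choose_unitAltPowerSum {p : ℕ} (hp : p.Prime) (m n b : ℕ) :
    (p : ℤ) ^ n ∣
      ∑ k ∈ range (n + 1), n.choose k * (-1) ^ k * unitAltPowerSum p m (k * (p - 1) + b) := by
  simp only [unitAltPowerSum, mul_sum]
  rw [sum_comm]
  refine dvd_sum fun j hj => ?_
  set a : ℤ := (m : ℤ) - 1 - 2 * j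
  have hbinom :
      ∑ k ∈ range (n + 1), (n.choose k : ℤ) * (-1) ^ k * ((-1) ^ j * a ^ (k * (p - 1) + b)) =
        (-1) ^ j * (a ^ b * (1 - a ^ (p - 1)) ^ n) := by
    rw [← sum_choose_mul_neg_one_pow_mul_pow, mul_sum]
    exact sum_congr rfl fun k _ => by ring
  have hcop : IsCoprime a p := ((Nat.prime_iff_prime_int.mp hp).irreducible.coprime_iff_not_dvd.mpr
    (mem_filter.mp hj).2).symm
  have hfermat : (p : ℤ) ∣ 1 - a ^ (p - 1) := (Int.ModEq.pow_card_sub_one_eq_one hp hcop).dvd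
  rw [hbinom]
  exact dvd_mul_of_dvd_right (dvd_mul_of_dvd_right (pow_dvd_pow_of_dvd hfermat n) _) _

lemma IsEulerSequence.pow_dvd_sub_unitAltPowerSum {E : ℕ → ℤ} (hE : IsEulerSequence E)
    {p : ℕ} (hp : Odd p) (n N : ℕ) :
    (p : ℤ) ^ n ∣
      (1 - (-1) ^ ((p - 1) / 2) * (p : ℤ) ^ N) * E N - unitAltPowerSum p (p ^ (n + 1)) N := by
  have hnext : (p : ℤ) ^ n ∣ E N - altPowerSum (p ^ (n + 1)) N :=
    (pow_dvd_pow _ n.le_succ).trans (by exact_mod_cast hE.dvd_sub_altPowerSum hp.pow N)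
  have hcur : (p : ℤ) ^ n ∣ E N - altPowerSum (p ^ n) N := by
    exact_mod_cast hE.dvd_sub_altPowerSum hp.pow N
  have hsplit := altPowerSum_mul hp (p ^ n) N
  rw [← pow_succ'] at hsplit
  have : (1 - (-1) ^ ((p - 1) / 2) * (p : ℤ) ^ N) * E N - unitAltPowerSum p (p ^ (n + 1)) N =
      (E N - altPowerSum (p ^ (n + 1)) N) -
        (-1) ^ ((p - 1) / 2) * (p : ℤ) ^ N * (E N - altPowerSum (p ^ n) N) := by
    rw [hsplit]
    ring
  rw [this]
  exact dvd_sub hnext (dvd_mul_of_dvd_right hcur _)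

lemma IsEulerSequence.pow_dvd_sum_choose {E : ℕ → ℤ} (hE : IsEulerSequence E) {p : ℕ}
    (hp : p.Prime) (hodd : Odd p) (n b : ℕ) :
    (p : ℤ) ^ n ∣ ∑ k ∈ range (n + 1), n.choose k * (-1) ^ k *
      ((1 - (-1) ^ ((p - 1) / 2) * (p : ℤ) ^ (k * (p - 1) + b)) * E (k * (p - 1) + b)) := by
  have hdiff : (p : ℤ) ^ n ∣ ∑ k ∈ range (n + 1), n.choose k * (-1) ^ k *
      ((1 - (-1) ^ ((p - 1) / 2) * (p : ℤ) ^ (k * (p - 1) + b)) * E (k * (p - 1) + b) -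
        unitAltPowerSum p (p ^ (n + 1)) (k * (p - 1) + b)) :=
    dvd_sum fun k _ => dvd_mul_of_dvd_right (hE.pow_dvd_sub_unitAltPowerSum hodd n _) _
  refine (dvd_add hdiff (pow_dvd_sum_choose_unitAltPowerSum hp (p ^ (n + 1)) n b)).trans
    (dvd_of_eq ?_)
  rw [← sum_add_distrib]
  exact sum_congr rfl fun k _ => by ring

lemma pIntegral_intCast {p : ℕ} (hp : 1 < p) (z : ℤ) : PIntegral p z := by
  rw [PIntegral, Rat.den_intCast, Nat.dvd_one]
  exact hp.ne'

lemma pIntegral_intCast_div_pow {p n : ℕ} (hp : 1 < p) {z : ℤ} (h : (p : ℤ) ^ n ∣ z) :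
    PIntegral p (z / p ^ n) := by
  obtain ⟨w, rfl⟩ := h
  have hpn : (p : ℚ) ^ n ≠ 0 := pow_ne_zero _ (by positivity)
  convert pIntegral_intCast hp w using 1
  push_cast
  field_simp

/-- for an odd prime `p` and `b ≥ 0`, the function
`f(k) = (1 - (-1)^{(p-1)/2} p^{k(p-1)+b}) E_{k(p-1)+b}` is a `p`-regular function,
where `E_n` are the Euler numbers. -/
theorem stmt_19 (E : ℕ → ℤ) (hE0 : E 0 = 1)
    (hEodd : ∀ n : ℕ, 1 ≤ n → E (2 * n - 1) = 0)
    (hEsum : ∀ n : ℕ, 1 ≤ n →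
      ∑ r ∈ Finset.range (n + 1), ((2 * n).choose (2 * r) : ℤ) * E (2 * r) = 0)
    (p : ℕ) (hp : p.Prime) (hp2 : p ≠ 2) (b : ℕ) :
    PRegular p (fun k : ℕ =>
      ((1 - (-1) ^ ((p - 1) / 2) * (p : ℤ) ^ (k * (p - 1) + b) : ℤ) : ℚ) *
        (E (k * (p - 1) + b) : ℚ)) := by
  have hE : IsEulerSequence E := ⟨hE0, hEodd, hEsum⟩
  refine ⟨fun k => ?_, fun n _ => ?_⟩
  · exact_mod_cast pIntegral_intCast hp.one_lt
      ((1 - (-1) ^ ((p - 1) / 2) * (p : ℤ) ^ (k * (p - 1) + b)) * E (k * (p - 1) + b))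
  · convert pIntegral_intCast_div_pow hp.one_lt
      (hE.pow_dvd_sum_choose hp (hp.odd_of_ne_two hp2) n b) using 2
    push_cast
    rfl
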